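/- Lucas-derivative of deformed Lucasnomial powers: for all a, u, v ∈ ℂ, all n ≥ 1 with {m}_{s,t} ≠ 0 for 1 ≤ m ≤ n, and all x ≠ 0: (1) D_{s,t}[z ↦ (z ⊕_{u,v} a)^{(n)}](x) = {n}_{s,t}·(ux ⊕_{u,v} a)^{(n−1)}; (2) D_{s,t}[z ↦ (a ⊕_{u,v} z)^{(n)}](x) = {n}_{s,t}·(a ⊕_{u,v} vx)^{(n−1)}; (3) D_{s,t}[z ↦ (a ⊖_{u,v} z)^{(n)}](x) = −{n}_{s,t}·(a ⊖_{u,v} vx)^{(n−1)}. -/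

import Mathlib

open scoped BigOperators

noncomputable section

/-- The Lucas sequence `{n}_{s,t}`. -/
def lucasSeq (s t : ℂ) : ℕ → ℂ
  | 0 => 0
  | 1 => 1
  | n + 2 => s * lucasSeq s t (n + 1) + t * lucasSeq s t n

/-- The Lucastorial `{n}_{s,t}!`. -/
def lucasFact (s t : ℂ) : ℕ → ℂ
  | 0 => 1
  | n + 1 => lucasFact s t n * lucasSeq s t (n + 1)

/-- The Lucasnomial coefficient `{n choose k}_{s,t}`. -/
def lucasBinom (s t : ℂ) (n k : ℕ) : ℂ :=
  lucasFact s t n / (lucasFact s t k * lucasFact s t (n - k))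

/-- The `(u,v)`-deformed Lucasnomial power `(x ⊕_{u,v} y)^{(n)}`. -/
def lucasPow (s t u v x y : ℂ) (n : ℕ) : ℂ :=
  ∑ k ∈ Finset.range (n + 1),
    lucasBinom s t n k * u ^ ((n - k).choose 2) * v ^ (k.choose 2) * x ^ (n - k) * y ^ k

/-- The Lucas-derivative with respect to the roots `p = φ`, `q = φ'`. -/
def lucasDeriv (p q : ℂ) (f : ℂ → ℂ) (x : ℂ) : ℂ :=
  (f (p * x) - f (q * x)) / ((p - q) * x)

/-- The Lucas-derivative, extended by `0` at `0`, as an operator suitable for iteration. -/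
def lucasDeriv0 (p q : ℂ) (f : ℂ → ℂ) : ℂ → ℂ :=
  fun x => if x = 0 then 0 else (f (p * x) - f (q * x)) / ((p - q) * x)

/-- The Lucas-Pantograph exponential `exp_{s,t}(z,u)`. -/
def lucasExp (s t u z : ℂ) : ℂ :=
  ∑' n : ℕ, u ^ (n.choose 2) * z ^ n / lucasFact s t n

/-- The Lucas-Pantograph sine `sin_{s,t}(z,u)`. -/
def lucasSin (s t u z : ℂ) : ℂ :=
  ∑' n : ℕ, (-1 : ℂ) ^ n * u ^ ((2 * n + 1).choose 2) * z ^ (2 * n + 1) / lucasFact s t (2 * n + 1)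

/-- The Lucas-Pantograph cosine `cos_{s,t}(z,u)`. -/
def lucasCos (s t u z : ℂ) : ℂ :=
  ∑' n : ℕ, (-1 : ℂ) ^ n * u ^ ((2 * n).choose 2) * z ^ (2 * n) / lucasFact s t (2 * n)

/-! Writing `φ, φ'` for the roots, Binet's formula `φ ^ j - φ' ^ j = {j} (φ - φ')` says that the
Lucas-derivative lowers monomials like an ordinary derivative: `D z ^ j = {j} z ^ (j - 1)`.
Applied termwise to `(z ⊕ y) ^ (n)`, the absorption identity
`{n choose k} {n - k} = {n} {n - 1 choose k}` and `u ^ C(j + 1, 2) = u ^ C(j, 2) u ^ j` turn the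
result into `{n} (u z ⊕ y) ^ (n - 1)`. The other two formulas follow from the symmetry
`(x ⊕_{u,v} y) ^ (n) = (y ⊕_{v,u} x) ^ (n)` and from `D[f(-z)](x) = -(D f)(-x)`. -/

open Finset

lemma lucasFact_ne_zero {s t : ℂ} {n : ℕ} (hL : ∀ m, 1 ≤ m → m ≤ n → lucasSeq s t m ≠ 0) :
    ∀ m ≤ n, lucasFact s t m ≠ 0
  | 0, _ => one_ne_zero
  | m + 1, hm => mul_ne_zero (lucasFact_ne_zero hL m (by omega)) (hL (m + 1) (by omega) hm)

lemma lucasBinom_symm (s t : ℂ) {n k : ℕ} (hk : k ≤ n) :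
    lucasBinom s t n (n - k) = lucasBinom s t n k := by
  rw [lucasBinom, lucasBinom, Nat.sub_sub_self hk, mul_comm]

lemma lucasBinom_succ_mul_lucasSeq {s t : ℂ} {m k : ℕ} (hk : k ≤ m)
    (hfk : lucasFact s t k ≠ 0) (hfmk : lucasFact s t (m + 1 - k) ≠ 0) :
    lucasBinom s t (m + 1) k * lucasSeq s t (m + 1 - k) =
      lucasSeq s t (m + 1) * lucasBinom s t m k := by
  have hmk : m + 1 - k = m - k + 1 := by omega
  have hfact : lucasFact s t (m - k + 1) = lucasFact s t (m - k) * lucasSeq s t (m - k + 1) := rfl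
  rw [hmk, hfact] at hfmk
  obtain ⟨hf, hl⟩ := mul_ne_zero_iff.mp hfmk
  simp only [lucasBinom, hmk, hfact]
  field_simp
  exact mul_comm _ _

lemma lucasPow_comm (s t u v x y : ℂ) (n : ℕ) :
    lucasPow s t u v x y n = lucasPow s t v u y x n := by
  rw [lucasPow, lucasPow, ← sum_range_reflect]
  refine sum_congr rfl fun k hk => ?_
  have hk : k ≤ n := Nat.lt_succ_iff.mp (mem_range.mp hk)
  rw [show n + 1 - 1 - k = n - k by omega, Nat.sub_sub_self hk, lucasBinom_symm s t hk]
  ring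

lemma Nat.choose_two_succ (j : ℕ) : (j + 1).choose 2 = j.choose 2 + j := by
  rw [Nat.choose_succ_succ', Nat.choose_one_right, add_comm]

section LucasDeriv

variable {p q : ℂ}

lemma lucasDeriv_sum {ι : Type*} (S : Finset ι) (f : ι → ℂ → ℂ) (x : ℂ) :
    lucasDeriv p q (fun z => ∑ i ∈ S, f i z) x = ∑ i ∈ S, lucasDeriv p q (f i) x := by
  simp only [lucasDeriv, ← sum_sub_distrib, sum_div]

lemma lucasDeriv_const_mul (c : ℂ) (f : ℂ → ℂ) (x : ℂ) :
    lucasDeriv p q (fun z => c * f z) x = c * lucasDeriv p q f x := by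
  simp only [lucasDeriv, ← mul_sub, mul_div_assoc]

lemma lucasDeriv_comp_neg (f : ℂ → ℂ) (x : ℂ) :
    lucasDeriv p q (fun z => f (-z)) x = -lucasDeriv p q f (-x) := by
  simp only [lucasDeriv, mul_neg, div_neg, neg_neg]

variable {s t : ℂ} (hsum : p + q = s) (hprod : p * q = -t)
include hsum hprod

lemma pow_sub_pow_eq_lucasSeq_mul (n : ℕ) : p ^ n - q ^ n = lucasSeq s t n * (p - q) := by
  subst hsum
  obtain rfl : t = -(p * q) := by linear_combination hprod
  induction n using Nat.twoStepInduction with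
  | zero => simp [lucasSeq]
  | one => simp [lucasSeq]
  | more n ih ih' =>
    rw [lucasSeq]
    linear_combination (p + q) * ih' - p * q * ih

lemma lucasDeriv_pow (hpq : p ≠ q) {x : ℂ} (hx : x ≠ 0) (n : ℕ) :
    lucasDeriv p q (fun z => z ^ n) x = lucasSeq s t n * x ^ (n - 1) := by
  have hpq : p - q ≠ 0 := sub_ne_zero.mpr hpq
  rcases n with _ | n
  · simp [lucasDeriv, lucasSeq]
  · rw [lucasDeriv, mul_pow, mul_pow, ← sub_mul, pow_sub_pow_eq_lucasSeq_mul hsum hprod, pow_succ,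
      Nat.add_sub_cancel]
    field_simp

lemma lucasDeriv_lucasPow_left (hpq : p ≠ q) (u v y : ℂ) {n : ℕ}
    (hL : ∀ m, 1 ≤ m → m ≤ n → lucasSeq s t m ≠ 0) {x : ℂ} (hx : x ≠ 0) :
    lucasDeriv p q (fun z => lucasPow s t u v z y n) x =
      lucasSeq s t n * lucasPow s t u v (u * x) y (n - 1) := by
  have hmonomials : (fun z => lucasPow s t u v z y n) = fun z => ∑ k ∈ range (n + 1),
      lucasBinom s t n k * u ^ ((n - k).choose 2) * v ^ (k.choose 2) * y ^ k * z ^ (n - k) := by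
    funext z
    exact sum_congr rfl fun k _ => mul_right_comm _ _ _
  simp only [hmonomials, lucasDeriv_sum, lucasDeriv_const_mul, lucasDeriv_pow hsum hprod hpq hx]
  rcases n with _ | m
  · simp [lucasSeq]
  -- the constant term `k = n` is killed by `{0} = 0`
  rw [sum_range_succ, Nat.sub_self, lucasSeq, zero_mul, mul_zero, add_zero, lucasPow, mul_sum]
  refine sum_congr rfl fun k hk => ?_
  have hk : k ≤ m := Nat.lt_succ_iff.mp (mem_range.mp hk)
  have habsorb := lucasBinom_succ_mul_lucasSeq hk (lucasFact_ne_zero hL k (by omega))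
    (lucasFact_ne_zero hL (m + 1 - k) (by omega))
  rw [show m + 1 - k = m - k + 1 by omega] at habsorb ⊢
  rw [Nat.add_sub_cancel, Nat.add_sub_cancel, Nat.choose_two_succ, pow_add, mul_pow]
  linear_combination u ^ ((m - k).choose 2) * u ^ (m - k) * v ^ (k.choose 2) * y ^ k *
    x ^ (m - k) * habsorb

lemma lucasDeriv_lucasPow_right (hpq : p ≠ q) (u v y : ℂ) {n : ℕ}
    (hL : ∀ m, 1 ≤ m → m ≤ n → lucasSeq s t m ≠ 0) {x : ℂ} (hx : x ≠ 0) :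
    lucasDeriv p q (fun z => lucasPow s t u v y z n) x =
      lucasSeq s t n * lucasPow s t u v y (v * x) (n - 1) := by
  simp only [lucasPow_comm s t u v y]
  exact lucasDeriv_lucasPow_left hsum hprod hpq v u y hL hx

end LucasDeriv

theorem lucasDeriv_lucasPow_general (s t : ℂ)
    (hst : s ^ 2 + 4 * t ≠ 0) (d : ℂ) (hd : d ^ 2 = s ^ 2 + 4 * t)
    (a u v : ℂ) (n : ℕ)
    (hL : ∀ m, 1 ≤ m → m ≤ n → lucasSeq s t m ≠ 0) (x : ℂ) (hx : x ≠ 0) :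
    lucasDeriv ((s + d) / 2) ((s - d) / 2) (fun z => lucasPow s t u v z a n) x =
      lucasSeq s t n * lucasPow s t u v (u * x) a (n - 1) ∧
    lucasDeriv ((s + d) / 2) ((s - d) / 2) (fun z => lucasPow s t u v a z n) x =
      lucasSeq s t n * lucasPow s t u v a (v * x) (n - 1) ∧
    lucasDeriv ((s + d) / 2) ((s - d) / 2) (fun z => lucasPow s t u v a (-z) n) x =
      -(lucasSeq s t n * lucasPow s t u v a (-(v * x)) (n - 1)) := by
  have hsum : (s + d) / 2 + (s - d) / 2 = s := by ring
  have hprod : (s + d) / 2 * ((s - d) / 2) = -t := by linear_combination -hd / 4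
  have hpq : (s + d) / 2 ≠ (s - d) / 2 := fun h => hst (by rw [← hd]; linear_combination d * h)
  refine ⟨lucasDeriv_lucasPow_left hsum hprod hpq u v a hL hx,
    lucasDeriv_lucasPow_right hsum hprod hpq u v a hL hx, ?_⟩
  rw [lucasDeriv_comp_neg (fun z => lucasPow s t u v a z n),
    lucasDeriv_lucasPow_right hsum hprod hpq u v a hL (neg_ne_zero.mpr hx), mul_neg]

/-- Lucas-derivative of deformed Lucasnomial powers, where `φ = (s+d)/2`, `φ' = (s-d)/2`
with `d` a square root of `s²+4t ≠ 0`. -/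
theorem lucasDeriv_lucasPow (s t : ℂ) (hs : s ≠ 0) (ht : t ≠ 0)
    (hst : s ^ 2 + 4 * t ≠ 0) (d : ℂ) (hd : d ^ 2 = s ^ 2 + 4 * t)
    (a u v : ℂ) (n : ℕ) (hn : 1 ≤ n)
    (hL : ∀ m, 1 ≤ m → m ≤ n → lucasSeq s t m ≠ 0) (x : ℂ) (hx : x ≠ 0) :
    lucasDeriv ((s + d) / 2) ((s - d) / 2) (fun z => lucasPow s t u v z a n) x =
      lucasSeq s t n * lucasPow s t u v (u * x) a (n - 1) ∧
    lucasDeriv ((s + d) / 2) ((s - d) / 2) (fun z => lucasPow s t u v a z n) x =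
      lucasSeq s t n * lucasPow s t u v a (v * x) (n - 1) ∧
    lucasDeriv ((s + d) / 2) ((s - d) / 2) (fun z => lucasPow s t u v a (-z) n) x =
      -(lucasSeq s t n * lucasPow s t u v a (-(v * x)) (n - 1)) :=
  lucasDeriv_lucasPow_general s t hst d hd a u v n hL x hx
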